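/- For a Galton–Watson process with offspring distribution ν and any a > 0 and N ≥ 1: if a · P^N(Y_1 ≥ aN) > 1, then the process started from one individual survives with positive probability. -/

import Mathlib

open MeasureTheory ProbabilityTheory Filter
open scoped ENNReal

/-- Convolution of two measures on `ℕ`. -/
noncomputable def mconv (μ ν : Measure ℕ) : Measure ℕ :=
  Measure.map (fun p : ℕ × ℕ => p.1 + p.2) (μ.prod ν)

/-- `i`-fold convolution power of a measure on `ℕ`. -/
noncomputable def convPow (ν : Measure ℕ) : ℕ → Measure ℕ
  | 0 => Measure.dirac 0
  | n + 1 => mconv (convPow ν n) ν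

/-- Transition probabilities of a Galton–Watson chain. -/
noncomputable def gwStep (ν : Measure ℕ) (i j : ℕ) : ℝ≥0∞ :=
  if i = 0 then (if j = 0 then 1 else 0) else convPow ν i {j}

/-- `(Y n)` is a Galton–Watson process under `P` with offspring distribution `ν`
and initial distribution `μ0`, characterized by its finite-dimensional
distributions. -/
def IsGW {Ω : Type*} [MeasurableSpace Ω] (P : Measure Ω)
    (Y : ℕ → Ω → ℕ) (ν μ0 : Measure ℕ) : Prop :=
  Measure.map (Y 0) P = μ0 ∧
  ∀ n : ℕ, ∀ a : ℕ → ℕ,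
    P {ω | ∀ k ≤ n, Y k ω = a k} =
      μ0 {a 0} * ∏ k ∈ Finset.range n, gwStep ν (a k) (a (k + 1))

open scoped Topology

/-! Let `f` be the generating function of `ν`. The transition operator of the chain maps
`j ↦ s ^ j` to `i ↦ f s ^ i`, so the process started from one individual dies out by time `t`
with probability at most `f^[t] 0`, and it suffices to find `s₀ < 1` with `f s₀ ≤ s₀`.
Since `f ^ N` is the generating function of `Y 1` under `P^N`, with `M = ⌈a N⌉` and
`p = P^N(Y 1 ≥ M)` we get `f s ^ N ≤ 1 - p + p s ^ M` for `s ≤ 1`; as `p M ≥ a p N > N`, the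
right-hand side is at most `s ^ N` for `s` slightly below `1`. -/

noncomputable def pgf (μ : Measure ℕ) (s : ℝ≥0∞) : ℝ≥0∞ := ∫⁻ k, s ^ k ∂μ

theorem pgf_mono (μ : Measure ℕ) : Monotone (pgf μ) := fun _ _ hst =>
  lintegral_mono fun k => pow_le_pow_left' hst k

theorem pgf_mconv (μ ν : Measure ℕ) [SFinite ν] (s : ℝ≥0∞) :
    pgf (mconv μ ν) s = pgf μ s * pgf ν s := by
  rw [pgf, mconv, lintegral_map (measurable_of_countable _) (measurable_of_countable _),
    lintegral_prod _ (measurable_of_countable _).aemeasurable]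
  simp_rw [pow_add, lintegral_const_mul _ (measurable_of_countable _)]
  exact lintegral_mul_const _ (measurable_of_countable _)

theorem pgf_convPow (ν : Measure ℕ) [SFinite ν] (n : ℕ) (s : ℝ≥0∞) :
    pgf (convPow ν n) s = pgf ν s ^ n := by
  induction n with
  | zero => simp [convPow, pgf]
  | succ n ih => rw [convPow, pgf_mconv, ih, pow_succ]

instance isProbabilityMeasure_mconv (μ ν : Measure ℕ) [IsProbabilityMeasure μ]
    [IsProbabilityMeasure ν] : IsProbabilityMeasure (mconv μ ν) :=
  Measure.isProbabilityMeasure_map (measurable_of_countable _).aemeasurable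

instance isProbabilityMeasure_convPow (ν : Measure ℕ) [IsProbabilityMeasure ν] (n : ℕ) :
    IsProbabilityMeasure (convPow ν n) := by
  induction n with
  | zero => rw [convPow]; infer_instance
  | succ n ih => rw [convPow]; infer_instance

theorem pgf_le_measure_Iio_add_measure_Ici_mul_pow (μ : Measure ℕ) (M : ℕ) {s : ℝ≥0∞}
    (hs : s ≤ 1) : pgf μ s ≤ μ (Set.Iio M) + μ (Set.Ici M) * s ^ M := by
  calc pgf μ s
      ≤ ∫⁻ k, (Set.Iio M).indicator 1 k + (Set.Ici M).indicator (fun _ => s ^ M) k ∂μ := by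
        refine lintegral_mono fun k => ?_
        rcases lt_or_ge k M with hk | hk
        · simpa [hk, not_le.2 hk] using pow_le_one₀ zero_le hs
        · simpa [hk, not_lt.2 hk] using pow_le_pow_right_of_le_one' hs hk
    _ = μ (Set.Iio M) + μ (Set.Ici M) * s ^ M := by
      rw [lintegral_add_left (measurable_of_countable _), lintegral_indicator_one measurableSet_Iio,
        lintegral_indicator_const measurableSet_Ici, mul_comm]

noncomputable def transOp (K : ℕ → ℕ → ℝ≥0∞) (g : ℕ → ℝ≥0∞) (i : ℕ) : ℝ≥0∞ :=
  ∑' j, K i j * g j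

noncomputable def pathWeight (K : ℕ → ℕ → ℝ≥0∞) {n : ℕ} (x : Fin (n + 1) → ℕ) : ℝ≥0∞ :=
  ∏ k : Fin n, K (x k.castSucc) (x k.succ)

theorem pathWeight_succ (K : ℕ → ℕ → ℝ≥0∞) {n : ℕ} (x : Fin (n + 2) → ℕ) :
    pathWeight K x = K (x 0) (x 1) * pathWeight K (Fin.tail x) := by
  simp [pathWeight, Fin.prod_univ_succ, Fin.tail]

theorem tsum_pathWeight_cons_mul (K : ℕ → ℕ → ℝ≥0∞) (g : ℕ → ℝ≥0∞) (n i : ℕ) :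
    ∑' x : Fin n → ℕ, pathWeight K (Fin.cons i x : Fin (n + 1) → ℕ) *
      g ((Fin.cons i x : Fin (n + 1) → ℕ) (Fin.last n)) = (transOp K)^[n] g i := by
  induction n generalizing i with
  | zero => simp [pathWeight]
  | succ n ih =>
    rw [← (Fin.consEquiv fun _ => ℕ).tsum_eq, ENNReal.tsum_prod', Function.iterate_succ_apply',
      transOp]
    refine tsum_congr fun j => ?_
    rw [← ih, ← ENNReal.tsum_mul_left]
    refine tsum_congr fun x => ?_
    simp only [Fin.consEquiv_apply, pathWeight_succ, Fin.cons_zero, Fin.cons_one, Fin.tail_cons,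
      ← Fin.succ_last, Fin.cons_succ, mul_assoc]
    rfl

theorem last_eq_zero_of_pathWeight_gwStep_ne_zero {ν : Measure ℕ} :
    ∀ {n : ℕ} {x : Fin (n + 1) → ℕ}, pathWeight (gwStep ν) x ≠ 0 →
      ∀ k, x k = 0 → x (Fin.last n) = 0
  | 0, x, _, k, hk => by rwa [Fin.fin_one_eq_zero k] at hk
  | n + 1, x, hx, k, hk => by
    rw [pathWeight_succ, mul_ne_zero_iff] at hx
    obtain ⟨k', hk'⟩ : ∃ k', Fin.tail x k' = 0 := by
      cases k using Fin.cases with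
      | zero =>
        refine ⟨0, by_contra fun h => hx.1 ?_⟩
        simp only [gwStep, hk, if_true, ite_eq_right_iff, one_ne_zero, imp_false]
        exact h
      | succ k => exact ⟨k, hk⟩
    simpa [Fin.tail, ← Fin.succ_last] using
      last_eq_zero_of_pathWeight_gwStep_ne_zero hx.2 k' hk'

theorem transOp_gwStep_of_ne_zero (ν : Measure ℕ) {i : ℕ} (hi : i ≠ 0) (g : ℕ → ℝ≥0∞) :
    transOp (gwStep ν) g i = ∫⁻ j, g j ∂convPow ν i := by
  simp [lintegral_countable', transOp, gwStep, hi, mul_comm]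

theorem transOp_gwStep_pow (ν : Measure ℕ) [SFinite ν] (s : ℝ≥0∞) :
    transOp (gwStep ν) (s ^ ·) = (pgf ν s ^ ·) := by
  funext i
  rcases eq_or_ne i 0 with rfl | hi
  · simp [transOp, gwStep]
  · rw [transOp_gwStep_of_ne_zero ν hi, ← pgf, pgf_convPow]

theorem iterate_transOp_gwStep_pow (ν : Measure ℕ) [SFinite ν] (n : ℕ) (s : ℝ≥0∞) :
    (transOp (gwStep ν))^[n] (s ^ ·) = ((pgf ν)^[n] s ^ ·) :=
  (Function.Semiconj.iterate_right (f := fun s (j : ℕ) => s ^ j)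
    (fun s => (transOp_gwStep_pow ν s).symm) n s).symm

namespace IsGW

variable {Ω : Type*} [MeasurableSpace Ω] {P : Measure Ω} {Y : ℕ → Ω → ℕ} {ν μ0 : Measure ℕ}

theorem measure_path_eq (hY : IsGW P Y ν μ0) {n : ℕ} (x : Fin (n + 1) → ℕ) :
    P {ω | (fun k : Fin (n + 1) => Y k ω) = x} = μ0 {x 0} * pathWeight (gwStep ν) x := by
  set a : ℕ → ℕ := fun k => if hk : k < n + 1 then x ⟨k, hk⟩ else 0
  have hpath : {ω | (fun k : Fin (n + 1) => Y k ω) = x} = {ω | ∀ k ≤ n, Y k ω = a k} := by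
    ext ω
    simp only [Set.mem_ofPred_eq, funext_iff]
    refine ⟨fun h k hk => ?_, fun h k => ?_⟩
    · exact (h ⟨k, Nat.lt_succ_of_le hk⟩).trans (by simp [a, hk])
    · exact (h k (Nat.le_of_lt_succ k.isLt)).trans (by simp [a, Nat.le_of_lt_succ k.isLt])
  rw [hpath, hY.2 n a, pathWeight, ← Fin.prod_univ_eq_prod_range]
  simp [a]
  rfl

theorem measure_ne_initial {i : ℕ} (hY : IsGW P Y ν (Measure.dirac i)) :
    P {ω | Y 0 ω ≠ i} = 0 := by
  refine measure_mono_null (t := ⋃ j : {j : ℕ // j ≠ i}, {ω | ∀ k ≤ 0, Y k ω = j})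
    (fun ω hω => Set.mem_iUnion.2 ⟨⟨Y 0 ω, hω⟩, fun k hk => by rw [Nat.le_zero.1 hk]⟩)
    (measure_iUnion_null fun j => ?_)
  rw [hY.2 0 fun _ => j]
  simp [j.2]

theorem measure_path_mem_le {i : ℕ} (hY : IsGW P Y ν (Measure.dirac i)) {n : ℕ}
    (S : Set (Fin (n + 1) → ℕ)) :
    P {ω | (fun k : Fin (n + 1) => Y k ω) ∈ S} ≤
      ∑' x : Fin n → ℕ, S.indicator (pathWeight (gwStep ν)) (Fin.cons i x) := by
  set path : Ω → Fin (n + 1) → ℕ := fun ω k => Y k ω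
  have hcover : {ω | path ω ∈ S} ⊆
      {ω | Y 0 ω ≠ i} ∪ ⋃ x : Fin n → ℕ, {ω | path ω ∈ S ∧ path ω = Fin.cons i x} := by
    intro ω hω
    by_cases h0 : Y 0 ω = i
    · refine Or.inr (Set.mem_iUnion.2 ⟨fun k => Y (k + 1) ω, hω, funext fun k => ?_⟩)
      cases k using Fin.cases <;> simp [path, h0]
    · exact Or.inl h0
  calc P {ω | path ω ∈ S}
      ≤ P {ω | Y 0 ω ≠ i} + ∑' x : Fin n → ℕ, P {ω | path ω ∈ S ∧ path ω = Fin.cons i x} :=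
        (measure_mono hcover).trans <|
          (measure_union_le _ _).trans (add_le_add le_rfl (measure_iUnion_le _))
    _ = ∑' x : Fin n → ℕ, P {ω | path ω ∈ S ∧ path ω = Fin.cons i x} := by
      rw [hY.measure_ne_initial, zero_add]
    _ ≤ ∑' x : Fin n → ℕ, S.indicator (pathWeight (gwStep ν)) (Fin.cons i x) := by
      refine ENNReal.tsum_le_tsum fun x => ?_
      by_cases hx : (Fin.cons i x : Fin (n + 1) → ℕ) ∈ S
      · rw [Set.indicator_of_mem hx]
        calc P {ω | path ω ∈ S ∧ path ω = Fin.cons i x}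
            ≤ P {ω | path ω = Fin.cons i x} := measure_mono fun ω hω => hω.2
          _ = pathWeight (gwStep ν) (Fin.cons i x) := by simp [path, hY.measure_path_eq]
      · have hempty : {ω | path ω ∈ S ∧ path ω = Fin.cons i x} = ∅ :=
          Set.eq_empty_of_forall_notMem fun ω hω => hx (hω.2 ▸ hω.1)
        simp [hempty]

theorem measure_path_mem_le_iterate {i : ℕ} (hY : IsGW P Y ν (Measure.dirac i)) {n : ℕ}
    (S : Set (Fin (n + 1) → ℕ)) (g : ℕ → ℝ≥0∞)
    (hg : ∀ x ∈ S, pathWeight (gwStep ν) x ≠ 0 → 1 ≤ g (x (Fin.last n))) :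
    P {ω | (fun k : Fin (n + 1) => Y k ω) ∈ S} ≤ (transOp (gwStep ν))^[n] g i := by
  refine (hY.measure_path_mem_le S).trans ?_
  rw [← tsum_pathWeight_cons_mul]
  refine ENNReal.tsum_le_tsum fun x => ?_
  by_cases hx : (Fin.cons i x : Fin (n + 1) → ℕ) ∈ S
  · rw [Set.indicator_of_mem hx]
    by_cases hw : pathWeight (gwStep ν) (Fin.cons i x : Fin (n + 1) → ℕ) = 0
    · simp [hw]
    · exact le_mul_of_one_le_right zero_le (hg _ hx hw)
  · simp [Set.indicator_of_notMem hx]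

theorem measure_exists_eq_zero_le [SFinite ν] (hY : IsGW P Y ν (Measure.dirac 1)) (t : ℕ) :
    P {ω | ∃ s ≤ t, Y s ω = 0} ≤ (pgf ν)^[t] 0 := by
  calc P {ω | ∃ s ≤ t, Y s ω = 0}
      ≤ P {ω | (fun k : Fin (t + 1) => Y k ω) ∈ {x | ∃ k, x k = 0}} :=
        measure_mono fun ω ⟨s, hs, h0⟩ => ⟨⟨s, Nat.lt_succ_of_le hs⟩, h0⟩
    _ ≤ (transOp (gwStep ν))^[t] ((0 : ℝ≥0∞) ^ ·) 1 :=
        hY.measure_path_mem_le_iterate _ _ fun x ⟨k, hk⟩ hx => by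
          simp [last_eq_zero_of_pathWeight_gwStep_ne_zero hx k hk]
    _ = (pgf ν)^[t] 0 := by rw [iterate_transOp_gwStep_pow]; exact pow_one _

theorem measure_le_convPow_Ici {N : ℕ} (hY : IsGW P Y ν (Measure.dirac N)) (hN : N ≠ 0)
    (M : ℕ) : P {ω | M ≤ Y 1 ω} ≤ convPow ν N (Set.Ici M) := by
  calc P {ω | M ≤ Y 1 ω}
      = P {ω | (fun k : Fin 2 => Y k ω) ∈ {x | M ≤ x (Fin.last 1)}} := rfl
    _ ≤ (transOp (gwStep ν))^[1] ((Set.Ici M).indicator 1) N :=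
        hY.measure_path_mem_le_iterate _ _ fun x hx _ =>
          (Set.indicator_of_mem (Set.mem_Ici.2 hx) 1).ge
    _ = convPow ν N (Set.Ici M) := by
      rw [Function.iterate_one, transOp_gwStep_of_ne_zero ν hN,
        lintegral_indicator_one measurableSet_Ici]

end IsGW

theorem exists_one_sub_add_mul_pow_le_pow {p : ℝ} {M N : ℕ} (h : (N : ℝ) < p * M) :
    ∃ x ∈ Set.Ioo (0 : ℝ) 1, 1 - p + p * x ^ M ≤ x ^ N := by
  have hnear : ∀ᶠ x in 𝓝 (1 : ℝ),
      ∑ k ∈ Finset.range N, x ^ k < p * ∑ k ∈ Finset.range M, x ^ k :=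
    ContinuousAt.eventually_lt (by fun_prop) (by fun_prop) (by simpa using h)
  obtain ⟨x, hx, hxI⟩ :=
    ((hnear.filter_mono nhdsWithin_le_nhds).and (Ioo_mem_nhdsLT zero_lt_one)).exists
  refine ⟨x, hxI, ?_⟩
  -- `1 - x ^ n = (1 - x) ∑_{k < n} x ^ k`, and `1 - x > 0`
  have := mul_lt_mul_of_pos_right hx (sub_pos.2 hxI.2)
  linear_combination this + geom_sum_mul x N - p * geom_sum_mul x M

theorem exists_pgf_le_self_lt_one (ν : Measure ℕ) [IsProbabilityMeasure ν] {M N : ℕ}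
    (hN : N ≠ 0) (h : (N : ℝ) < (convPow ν N (Set.Ici M)).toReal * M) :
    ∃ s < 1, pgf ν s ≤ s := by
  set p := convPow ν N (Set.Ici M)
  have hp1 : p ≤ 1 := prob_le_one
  obtain ⟨x, ⟨hx0, hx1⟩, hx⟩ := exists_one_sub_add_mul_pow_le_pow h
  refine ⟨ENNReal.ofReal x, ENNReal.ofReal_lt_one.2 hx1, ?_⟩
  have htail : pgf ν (ENNReal.ofReal x) ^ N ≤ (1 - p) + p * ENNReal.ofReal x ^ M := by
    rw [← pgf_convPow, ← prob_compl_eq_one_sub measurableSet_Ici, Set.compl_Ici]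
    exact pgf_le_measure_Iio_add_measure_Ici_mul_pow _ M (ENNReal.ofReal_le_one.2 hx1.le)
  have hp1' : p.toReal ≤ 1 := by simpa using ENNReal.toReal_mono ENNReal.one_ne_top hp1
  have hreal : (1 - p) + p * ENNReal.ofReal x ^ M =
      ENNReal.ofReal (1 - p.toReal + p.toReal * x ^ M) := by
    rw [ENNReal.ofReal_add (sub_nonneg.2 hp1') (by positivity),
      ENNReal.ofReal_sub _ ENNReal.toReal_nonneg, ENNReal.ofReal_mul ENNReal.toReal_nonneg,
      ENNReal.ofReal_pow hx0.le, ENNReal.ofReal_one, ENNReal.ofReal_toReal (measure_ne_top _ _)]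
  rw [← ENNReal.pow_le_pow_left_iff hN]
  calc pgf ν (ENNReal.ofReal x) ^ N ≤ (1 - p) + p * ENNReal.ofReal x ^ M := htail
    _ = ENNReal.ofReal (1 - p.toReal + p.toReal * x ^ M) := hreal
    _ ≤ ENNReal.ofReal (x ^ N) := ENNReal.ofReal_le_ofReal hx
    _ = ENNReal.ofReal x ^ N := ENNReal.ofReal_pow hx0.le _

theorem IsGW.measure_forall_ne_zero_pos {Ω : Type*} [MeasurableSpace Ω] {P : Measure Ω}
    [IsProbabilityMeasure P] {Y : ℕ → Ω → ℕ} {ν : Measure ℕ} [SFinite ν]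
    (hY : IsGW P Y ν (Measure.dirac 1)) {s₀ : ℝ≥0∞} (hs₀ : s₀ < 1) (hfix : pgf ν s₀ ≤ s₀) :
    0 < P {ω | ∀ t, Y t ω ≠ 0} := by
  have hext : P {ω | ∀ t, Y t ω ≠ 0}ᶜ ≤ s₀ := by
    have hunion : {ω | ∀ t, Y t ω ≠ 0}ᶜ = ⋃ t, {ω | ∃ s ≤ t, Y s ω = 0} := by
      ext ω
      simpa using ⟨fun ⟨s, hs⟩ => ⟨s, s, le_rfl, hs⟩, fun ⟨_, s, _, hs⟩ => ⟨s, hs⟩⟩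
    have hmono : Monotone fun t => {ω | ∃ s ≤ t, Y s ω = 0} :=
      fun t u htu ω ⟨s, hs, h0⟩ => ⟨s, hs.trans htu, h0⟩
    have hinv : Set.MapsTo (pgf ν) (Set.Iic s₀) (Set.Iic s₀) :=
      fun s hs => (pgf_mono ν hs).trans hfix
    rw [hunion, hmono.measure_iUnion]
    exact iSup_le fun t =>
      (hY.measure_exists_eq_zero_le t).trans (hinv.iterate t (Set.mem_Iic.2 zero_le))
  refine pos_iff_ne_zero.2 fun h0 => hs₀.not_ge ?_
  simpa [h0] using (measure_univ_le_add_compl (μ := P) {ω | ∀ t, Y t ω ≠ 0}).trans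
    (add_le_add le_rfl hext)

theorem gw_local_survival_criterion_general {Ω Ω' : Type*} [MeasurableSpace Ω] [MeasurableSpace Ω']
    (P : Measure Ω) (P' : Measure Ω') [IsProbabilityMeasure P']
    (ν : Measure ℕ) [IsProbabilityMeasure ν]
    (a : ℝ) (ha : 0 < a) (N : ℕ) (hN : 1 ≤ N)
    (YN : ℕ → Ω → ℕ) (Y' : ℕ → Ω' → ℕ)
    (hYN : IsGW P YN ν (Measure.dirac N)) (hY' : IsGW P' Y' ν (Measure.dirac 1))
    (h : 1 < a * (P {ω | a * N ≤ (YN 1 ω : ℝ)}).toReal) :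
    0 < P' {ω | ∀ t : ℕ, Y' t ω ≠ 0} := by
  set M := ⌈a * N⌉₊
  set p := convPow ν N (Set.Ici M)
  have hN0 : N ≠ 0 := Nat.one_le_iff_ne_zero.1 hN
  have hP : P {ω | a * N ≤ (YN 1 ω : ℝ)} ≤ p :=
    (measure_mono fun ω hω => Nat.ceil_le.2 hω).trans (hYN.measure_le_convPow_Ici hN0 M)
  have hp : 1 < a * p.toReal := h.trans_le (by gcongr; exact measure_ne_top _ _)
  have hpM : (N : ℝ) < p.toReal * M := by
    calc (N : ℝ) < a * p.toReal * N := lt_mul_left (Nat.cast_pos.2 hN) hp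
      _ = p.toReal * (a * N) := by ring
      _ ≤ p.toReal * M := by gcongr; exact Nat.le_ceil _
  obtain ⟨s₀, hs₀, hfix⟩ := exists_pgf_le_self_lt_one ν hN0 hpM
  exact hY'.measure_forall_ne_zero_pos hs₀ hfix

/-- If `a * P^N(Y 1 ≥ a N) > 1` for some `a > 0` and `N ≥ 1`, then the process
started from one individual survives with positive probability. -/
theorem gw_local_survival_criterion {Ω Ω' : Type*} [MeasurableSpace Ω] [MeasurableSpace Ω']
    (P : Measure Ω) (P' : Measure Ω') [IsProbabilityMeasure P] [IsProbabilityMeasure P']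
    (ν : Measure ℕ) [IsProbabilityMeasure ν]
    (a : ℝ) (ha : 0 < a) (N : ℕ) (hN : 1 ≤ N)
    (YN : ℕ → Ω → ℕ) (Y' : ℕ → Ω' → ℕ)
    (hYN : IsGW P YN ν (Measure.dirac N)) (hY' : IsGW P' Y' ν (Measure.dirac 1))
    (h : 1 < a * (P {ω | a * N ≤ (YN 1 ω : ℝ)}).toReal) :
    0 < P' {ω | ∀ t : ℕ, Y' t ω ≠ 0} :=
  gw_local_survival_criterion_general P P' ν a ha N hN YN Y' hYN hY' h
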